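/- Let N be a bounded symmetric positive semi-definite operator on a Hilbert space H with ker N = span{e₁,…,e_m}, and let A be a bounded symmetric operator. If λ > 0 and h ∈ H satisfy λ h + N A h = 0, and if A is positive semi-definite on the orthogonal complement of span{e₁,…,e_m}, then h = 0. Hence −L = −NA has no positive eigenvalues beyond 0. -/
import Mathlib


open scoped RealInnerProductSpace

/-- Auxiliary: a psd symmetric operator with `⟪N x, x⟫ = 0` kills `x`. -/
lemma psd_kernel {H : Type*} [NormedAddCommGroup H] [InnerProductSpace ℝ H]
    (N : H →L[ℝ] H) (hNsym : ∀ x y : H, ⟪N x, y⟫ = ⟪x, N y⟫)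
    (hNpos : ∀ x : H, 0 ≤ ⟪N x, x⟫) (x : H) (hx : ⟪N x, x⟫ = 0) : N x = 0 := by
  by_contra hne
  set a : ℝ := ‖N x‖ ^ 2 with ha
  have ha0 : 0 < a := by
    have := norm_pos_iff.mpr hne
    positivity
  set b : ℝ := ⟪N (N x), N x⟫ with hb
  have hb0 : 0 ≤ b := hNpos _
  set t : ℝ := -a / (b + 1) with ht
  have key : 0 ≤ ⟪N (x + t • N x), x + t • N x⟫ := hNpos _
  have expand : ⟪N (x + t • N x), x + t • N x⟫ = 2 * t * a + t ^ 2 * b := by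
    have h1 : ⟪N (N x), x⟫ = a := by
      rw [hNsym, real_inner_comm, real_inner_self_eq_norm_sq]
    have h2 : ⟪N x, N x⟫ = a := real_inner_self_eq_norm_sq _
    simp only [map_add, map_smul, inner_add_left, inner_add_right,
      real_inner_smul_left, real_inner_smul_right]
    rw [hx, h1, h2]
    ring
  rw [expand] at key
  have hbp : (0:ℝ) < b + 1 := by linarith
  have : 2 * t * a + t ^ 2 * b = a ^ 2 / (b + 1) ^ 2 * (-(b + 2)) := by
    rw [ht]; field_simp; ring
  rw [this] at key
  nlinarith [sq_nonneg a, sq_nonneg (b+1), mul_pos (div_pos (pow_pos ha0 2) (pow_pos hbp 2)) (by linarith : (0:ℝ) < b + 2)]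

/-- let `N` be a bounded symmetric positive semi-definite operator on a
Hilbert space `H` with `ker N = span{e₁,…,e_m}`, and `A` a bounded symmetric operator
which is positive semi-definite on the orthogonal complement of `span{e₁,…,e_m}`.
If `λ > 0` and `λ h + N A h = 0`, then `h = 0`; hence `−NA` has no positive eigenvalues. -/
theorem no_positive_eigenvalues {H : Type*} [NormedAddCommGroup H]
    [InnerProductSpace ℝ H] [CompleteSpace H]
    (N A : H →L[ℝ] H) (m : ℕ) (e : Fin m → H)
    (hNsym : ∀ x y : H, ⟪N x, y⟫ = ⟪x, N y⟫)
    (hAsym : ∀ x y : H, ⟪A x, y⟫ = ⟪x, A y⟫)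
    (hNpos : ∀ x : H, 0 ≤ ⟪N x, x⟫)
    (hker : ∀ x : H, N x = 0 ↔ x ∈ Submodule.span ℝ (Set.range e))
    (hApos : ∀ x : H, (∀ k, ⟪x, e k⟫ = 0) → 0 ≤ ⟪A x, x⟫)
    (lam : ℝ) (hlam : 0 < lam) (h : H)
    (heq : lam • h + N (A h) = 0) :
    h = 0 := by
  -- h ⊥ e k
  have hNe : ∀ k, N (e k) = 0 := fun k =>
    (hker (e k)).mpr (Submodule.subset_span ⟨k, rfl⟩)
  have horth : ∀ k, ⟪h, e k⟫ = 0 := by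
    intro k
    have h1 : ⟪lam • h + N (A h), e k⟫ = 0 := by rw [heq]; simp
    rw [inner_add_left, real_inner_smul_left, hNsym, hNe k, inner_zero_right] at h1
    have := h1
    nlinarith [this]
  have hAh : 0 ≤ ⟪A h, h⟫ := hApos h horth
  -- test against A h
  have h2 : lam * ⟪h, A h⟫ + ⟪N (A h), A h⟫ = 0 := by
    have : ⟪lam • h + N (A h), A h⟫ = 0 := by rw [heq]; simp
    rwa [inner_add_left, real_inner_smul_left] at this
  have hNAh : ⟪N (A h), A h⟫ = 0 := by
    have hhAh : 0 ≤ ⟪h, A h⟫ := by rwa [real_inner_comm] at hAh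
    nlinarith [hNpos (A h), mul_nonneg hlam.le hhAh]
  have hNzero : N (A h) = 0 := psd_kernel N hNsym hNpos _ hNAh
  have : lam • h = 0 := by rw [← heq, hNzero]; simp
  have := smul_eq_zero.mp this
  rcases this with h1 | h1
  · exact absurd h1 hlam.ne'
  · exact h1
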